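/- arXiv:2410.03669 — 2 statements merged into one kernel-verified Lean document; each statement's English description precedes it below -/
import Mathlib

section
/- Let T = (T₁,…,T_d) with each T_i a 2×2 operator matrix T_i = [[P_i, Q_i],[R_i, S_i]], P_i,Q_i,R_i,S_i ∈ B(H). Then max{Jtω_q(P)², Jtω_q(S)²} ≤ Jtω_q(T)², where P = (P₁,…,P_d), S = (S₁,…,S_d). -/
open scoped InnerProductSpace

variable {H : Type*} [NormedAddCommGroup H] [InnerProductSpace ℂ H]

/-- The joint `q`-numerical range of a `d`-tuple of bounded operators:
`{(⟨T₁x,y⟩,…,⟨T_dx,y⟩) : ‖x‖ = ‖y‖ = 1, ⟨x,y⟩ = q}` (with `⟨x,y⟩` linear in `x`). -/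
def JtW {d : ℕ} (q : ℂ) (T : Fin d → H →L[ℂ] H) : Set (Fin d → ℂ) :=
  {z | ∃ x y : H, ‖x‖ = 1 ∧ ‖y‖ = 1 ∧ ⟪y, x⟫_ℂ = q ∧ z = fun i => ⟪y, (T i) x⟫_ℂ}


/-- The `2×2` block operator `[[P,Q],[R,S]]` acting on `H ⊕ H` (with the Hilbert space
structure of `WithLp 2 (H × H)`). -/
noncomputable def blockOp [CompleteSpace H] (P Q R S : H →L[ℂ] H) :
    WithLp 2 (H × H) →L[ℂ] WithLp 2 (H × H) :=
  ((WithLp.prodContinuousLinearEquiv 2 ℂ H H).symm.toContinuousLinearMap) ∘L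
    (((P ∘L ContinuousLinearMap.fst ℂ H H + Q ∘L ContinuousLinearMap.snd ℂ H H).prod
      (R ∘L ContinuousLinearMap.fst ℂ H H + S ∘L ContinuousLinearMap.snd ℂ H H))) ∘L
    ((WithLp.prodContinuousLinearEquiv 2 ℂ H H).toContinuousLinearMap)

/-- The joint `q`-numerical radius. -/
noncomputable def Jtw {K : Type*} [NormedAddCommGroup K] [InnerProductSpace ℂ K] {d : ℕ}
    (q : ℂ) (T : Fin d → K →L[ℂ] K) : ℝ :=
  sSup {r | ∃ x y : K, ‖x‖ = 1 ∧ ‖y‖ = 1 ∧ ⟪y, x⟫_ℂ = q ∧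
    r = Real.sqrt (∑ i, ‖⟪y, (T i) x⟫_ℂ‖ ^ 2)}

/-- The single-operator `q`-numerical radius. -/
noncomputable def wq {K : Type*} [NormedAddCommGroup K] [InnerProductSpace ℂ K]
    (q : ℂ) (S : K →L[ℂ] K) : ℝ :=
  sSup {r | ∃ x y : K, ‖x‖ = 1 ∧ ‖y‖ = 1 ∧ ⟪y, x⟫_ℂ = q ∧ r = ‖⟪y, S x⟫_ℂ‖}

/-- The classical numerical radius. -/
noncomputable def nr {K : Type*} [NormedAddCommGroup K] [InnerProductSpace ℂ K]
    (T : K →L[ℂ] K) : ℝ :=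
  sSup {r | ∃ x : K, ‖x‖ = 1 ∧ r = ‖⟪x, T x⟫_ℂ‖}

/-!
If `f` is an isometric embedding with `⟪f y, T (f x)⟫ = ⟪y, A x⟫`, then every witness pair
`(x, y)` for the `q`-numerical radius of `A` is mapped by `f` to a witness pair `(f x, f y)`
for `T` with the same value, so `Jtw q A ≤ Jtw q T`. The corner entries `P` and `S` of a
block operator are such compressions, via the embeddings of `H` as the first and the second
summand of `H ⊕ H`.
-/

section Compression

variable {K L : Type*} [NormedAddCommGroup K] [InnerProductSpace ℂ K]
  [NormedAddCommGroup L] [InnerProductSpace ℂ L] {d : ℕ}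

theorem Jtw_nonneg (q : ℂ) (T : Fin d → K →L[ℂ] K) : 0 ≤ Jtw q T :=
  Real.sSup_nonneg <| by
    rintro r ⟨x, y, -, -, -, rfl⟩
    exact Real.sqrt_nonneg _

theorem bddAbove_Jtw_set (q : ℂ) (T : Fin d → K →L[ℂ] K) :
    BddAbove {r | ∃ x y : K, ‖x‖ = 1 ∧ ‖y‖ = 1 ∧ ⟪y, x⟫_ℂ = q ∧
      r = Real.sqrt (∑ i, ‖⟪y, (T i) x⟫_ℂ‖ ^ 2)} := by
  refine ⟨Real.sqrt (∑ i, ‖T i‖ ^ 2), ?_⟩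
  rintro r ⟨x, y, hx, hy, -, rfl⟩
  gcongr with i
  calc ‖⟪y, (T i) x⟫_ℂ‖ ≤ ‖y‖ * ‖(T i) x‖ := norm_inner_le_norm y _
    _ ≤ ‖y‖ * (‖T i‖ * ‖x‖) := by gcongr; exact (T i).le_opNorm x
    _ = ‖T i‖ := by rw [hx, hy, one_mul, mul_one]

theorem Jtw_le_of_compression (q : ℂ) (A : Fin d → K →L[ℂ] K) (T : Fin d → L →L[ℂ] L)
    (f : K →ₗᵢ[ℂ] L) (hf : ∀ i x y, ⟪f y, T i (f x)⟫_ℂ = ⟪y, A i x⟫_ℂ) :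
    Jtw q A ≤ Jtw q T := by
  refine Real.sSup_le ?_ (Jtw_nonneg q T)
  rintro r ⟨x, y, hx, hy, hxy, rfl⟩
  refine le_csSup (bddAbove_Jtw_set q T) ⟨f x, f y, ?_, ?_, ?_, ?_⟩
  · rw [f.norm_map, hx]
  · rw [f.norm_map, hy]
  · rw [f.inner_map_map, hxy]
  · simp only [hf]

end Compression

section Embeddings

variable (R E F : Type*) [Semiring R] [SeminormedAddCommGroup E] [SeminormedAddCommGroup F]
  [Module R E] [Module R F]

noncomputable def inlL2 : E →ₗᵢ[R] WithLp 2 (E × F) where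
  toLinearMap := (WithLp.linearEquiv 2 R (E × F)).symm.toLinearMap ∘ₗ LinearMap.inl R E F
  norm_map' x := by simp

noncomputable def inrL2 : F →ₗᵢ[R] WithLp 2 (E × F) where
  toLinearMap := (WithLp.linearEquiv 2 R (E × F)).symm.toLinearMap ∘ₗ LinearMap.inr R E F
  norm_map' x := by simp

end Embeddings

section Block

variable [CompleteSpace H]

theorem inner_inlL2_blockOp_inlL2 (P Q R S : H →L[ℂ] H) (x y : H) :
    ⟪inlL2 ℂ H H y, blockOp P Q R S (inlL2 ℂ H H x)⟫_ℂ = ⟪y, P x⟫_ℂ := by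
  simp [inlL2, blockOp, WithLp.prod_inner_apply]

theorem inner_inrL2_blockOp_inrL2 (P Q R S : H →L[ℂ] H) (x y : H) :
    ⟪inrL2 ℂ H H y, blockOp P Q R S (inrL2 ℂ H H x)⟫_ℂ = ⟪y, S x⟫_ℂ := by
  simp [inrL2, blockOp, WithLp.prod_inner_apply]

end Block

theorem stmt_14_general {d : ℕ} [CompleteSpace H] (q : ℂ)
    (P Q R S : Fin d → H →L[ℂ] H) :
    max (Jtw q P ^ 2) (Jtw q S ^ 2) ≤
      Jtw q (fun i => blockOp (P i) (Q i) (R i) (S i)) ^ 2 := by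
  have hP : Jtw q P ≤ Jtw q (fun i => blockOp (P i) (Q i) (R i) (S i)) :=
    Jtw_le_of_compression q P _ (inlL2 ℂ H H) fun i => inner_inlL2_blockOp_inlL2 _ _ _ _
  have hS : Jtw q S ≤ Jtw q (fun i => blockOp (P i) (Q i) (R i) (S i)) :=
    Jtw_le_of_compression q S _ (inrL2 ℂ H H) fun i => inner_inrL2_blockOp_inrL2 _ _ _ _
  exact max_le (pow_le_pow_left₀ (Jtw_nonneg q P) hP 2) (pow_le_pow_left₀ (Jtw_nonneg q S) hS 2)

theorem stmt_14 {d : ℕ} [CompleteSpace H] (q : ℂ) (hq : ‖q‖ ≤ 1)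
    (P Q R S : Fin d → H →L[ℂ] H) :
    max (Jtw q P ^ 2) (Jtw q S ^ 2) ≤
      Jtw q (fun i => blockOp (P i) (Q i) (R i) (S i)) ^ 2 :=
  stmt_14_general q P Q R S
end

section
/- Let T = [[P, Q],[R, S]] be a 2×2 operator matrix on H ⊕ H with P,Q,R,S ∈ B(H) and |q| ≤ 1. Then ω_q(T) ≤ (|q|/2)(ω(P)+ω(S)+√((ω(P)−ω(S))² + (‖R‖+‖Q‖)²)) + √(1−|q|²)·(‖P‖²+‖Q‖²+‖R‖²+‖S‖²)^{1/2}. -/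
/-!
Write `y = ⟪x, y⟫ • x + w` with `w ⟂ x`; then `‖w‖ = √(1 - |q|²)` and
`⟪y, T x⟫ = q ⟪x, T x⟫ + ⟪w, T x⟫`, so `ω_q(T) ≤ |q| ω(T) + √(1 - |q|²) ‖T‖` for every operator `T`.
For the block operator, `⟪x, T x⟫` is bounded by the quadratic form of the `2 × 2` matrix
`[[ω(P), (‖R‖ + ‖Q‖)/2], [(‖R‖ + ‖Q‖)/2, ω(S)]]` at the unit vector `(‖x₁‖, ‖x₂‖)`, hence by its
larger eigenvalue, while `‖T‖² ≤ ‖P‖² + ‖Q‖² + ‖R‖² + ‖S‖²` by Cauchy–Schwarz.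
-/

open scoped InnerProductSpace

variable {H : Type*} [NormedAddCommGroup H] [InnerProductSpace ℂ H]

open scoped ComplexConjugate

/-- The right-hand side is the larger eigenvalue of `[[p, c/2], [c/2, s]]`. -/
lemma quadratic_form_le_of_sq_add_sq_eq_one (p s c a b : ℝ) (hab : a ^ 2 + b ^ 2 = 1) :
    p * a ^ 2 + s * b ^ 2 + c * (a * b) ≤ (p + s + √((p - s) ^ 2 + c ^ 2)) / 2 := by
  have hL : (p - s) * (a ^ 2 - b ^ 2) + c * (2 * a * b) ≤ √((p - s) ^ 2 + c ^ 2) := by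
    refine Real.le_sqrt_of_sq_le ?_
    have hunit : (a ^ 2 - b ^ 2) ^ 2 + (2 * a * b) ^ 2 = 1 := by
      linear_combination (a ^ 2 + b ^ 2 + 1) * hab
    nlinarith [sq_nonneg ((p - s) * (2 * a * b) - c * (a ^ 2 - b ^ 2))]
  linear_combination (hL + (p + s) * hab) / 2

section NumericalRadius

variable {K : Type*} [NormedAddCommGroup K] [InnerProductSpace ℂ K]

lemma norm_inner_apply_le_opNorm (T : K →L[ℂ] K) (u v : K) :
    ‖⟪u, T v⟫_ℂ‖ ≤ ‖T‖ * (‖u‖ * ‖v‖) :=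
  calc ‖⟪u, T v⟫_ℂ‖ ≤ ‖u‖ * ‖T v‖ := norm_inner_le_norm _ _
    _ ≤ ‖u‖ * (‖T‖ * ‖v‖) := by gcongr; exact T.le_opNorm v
    _ = ‖T‖ * (‖u‖ * ‖v‖) := by ring

lemma nr_nonneg (T : K →L[ℂ] K) : 0 ≤ nr T :=
  Real.sSup_nonneg (by rintro r ⟨x, -, rfl⟩; positivity)

lemma norm_inner_self_apply_le_nr (T : K →L[ℂ] K) {x : K} (hx : ‖x‖ = 1) :
    ‖⟪x, T x⟫_ℂ‖ ≤ nr T := by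
  refine le_csSup ⟨‖T‖, ?_⟩ ⟨x, hx, rfl⟩
  rintro r ⟨u, hu, rfl⟩
  simpa [hu] using norm_inner_apply_le_opNorm T u u

lemma norm_inner_self_apply_le_nr_mul_sq (T : K →L[ℂ] K) (u : K) :
    ‖⟪u, T u⟫_ℂ‖ ≤ nr T * ‖u‖ ^ 2 := by
  rcases eq_or_ne u 0 with rfl | hu
  · simp
  set v : K := (‖u‖⁻¹ : ℂ) • u
  have hu' : (‖u‖ : ℂ) ≠ 0 := by exact_mod_cast norm_ne_zero_iff.mpr hu
  have huv : u = (‖u‖ : ℂ) • v := by simp only [v, smul_smul, mul_inv_cancel₀ hu', one_smul]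
  have hinner : ⟪u, T u⟫_ℂ = (‖u‖ : ℂ) ^ 2 * ⟪v, T v⟫_ℂ := by
    conv_lhs => rw [huv]
    rw [map_smul, inner_smul_left, inner_smul_right, Complex.conj_ofReal]
    ring
  rw [hinner, norm_mul, norm_pow, Complex.norm_real, Real.norm_of_nonneg (norm_nonneg u), mul_comm]
  gcongr
  exact norm_inner_self_apply_le_nr T (norm_smul_inv_norm hu)

lemma nr_le {T : K →L[ℂ] K} {A : ℝ} (hA : 0 ≤ A) (h : ∀ x : K, ‖x‖ = 1 → ‖⟪x, T x⟫_ℂ‖ ≤ A) :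
    nr T ≤ A :=
  Real.sSup_le (by rintro r ⟨x, hx, rfl⟩; exact h x hx) hA

lemma norm_sub_inner_smul_sq {x : K} (hx : ‖x‖ = 1) (y : K) :
    ‖y - ⟪x, y⟫_ℂ • x‖ ^ 2 = ‖y‖ ^ 2 - ‖⟪x, y⟫_ℂ‖ ^ 2 := by
  have hre : RCLike.re ⟪y, ⟪x, y⟫_ℂ • x⟫_ℂ = ‖⟪x, y⟫_ℂ‖ ^ 2 := by
    rw [inner_smul_right, ← inner_conj_symm (𝕜 := ℂ) x y, RCLike.conj_mul, RCLike.norm_conj]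
    norm_cast
  rw [norm_sub_sq (𝕜 := ℂ), hre, norm_smul, hx]
  ring

theorem wq_le_nr_add (q : ℂ) (T : K →L[ℂ] K) :
    wq q T ≤ ‖q‖ * nr T + √(1 - ‖q‖ ^ 2) * ‖T‖ := by
  refine Real.sSup_le ?_ (add_nonneg (mul_nonneg (norm_nonneg q) (nr_nonneg T)) (by positivity))
  rintro r ⟨x, y, hx, hy, hyx, rfl⟩
  have hxy : ⟪x, y⟫_ℂ = conj q := by rw [← hyx, inner_conj_symm]
  set w := y - ⟪x, y⟫_ℂ • x
  have hw : ‖w‖ = √(1 - ‖q‖ ^ 2) := by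
    rw [← Real.sqrt_sq (norm_nonneg w), norm_sub_inner_smul_sq hx, hy, hxy, RCLike.norm_conj,
      one_pow]
  have hsplit : ⟪y, T x⟫_ℂ = q * ⟪x, T x⟫_ℂ + ⟪w, T x⟫_ℂ := by
    rw [inner_sub_left, inner_smul_left, hxy, Complex.conj_conj]
    ring
  calc ‖⟪y, T x⟫_ℂ‖ ≤ ‖q‖ * ‖⟪x, T x⟫_ℂ‖ + ‖⟪w, T x⟫_ℂ‖ := by
        rw [hsplit, ← norm_mul]; exact norm_add_le _ _
    _ ≤ ‖q‖ * nr T + ‖T‖ * (‖w‖ * ‖x‖) := by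
        gcongr
        · exact norm_inner_self_apply_le_nr T hx
        · exact norm_inner_apply_le_opNorm T w x
    _ = ‖q‖ * nr T + √(1 - ‖q‖ ^ 2) * ‖T‖ := by rw [hw, hx]; ring

end NumericalRadius

section BlockOperator

variable [CompleteSpace H] (P Q R S : H →L[ℂ] H)

lemma blockOp_apply_fst (x : WithLp 2 (H × H)) : (blockOp P Q R S x).fst = P x.fst + Q x.snd :=
  rfl

lemma blockOp_apply_snd (x : WithLp 2 (H × H)) : (blockOp P Q R S x).snd = R x.fst + S x.snd :=
  rfl

lemma inner_blockOp_apply_self (x : WithLp 2 (H × H)) :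
    ⟪x, blockOp P Q R S x⟫_ℂ =
      ⟪x.fst, P x.fst⟫_ℂ + ⟪x.fst, Q x.snd⟫_ℂ + ⟪x.snd, R x.fst⟫_ℂ + ⟪x.snd, S x.snd⟫_ℂ := by
  rw [WithLp.prod_inner_apply, WithLp.ofLp_fst, WithLp.ofLp_fst, WithLp.ofLp_snd,
    WithLp.ofLp_snd, blockOp_apply_fst, blockOp_apply_snd, inner_add_right,
    inner_add_right, add_assoc, add_assoc, add_assoc]

lemma nr_blockOp_le :
    nr (blockOp P Q R S) ≤ (nr P + nr S + √((nr P - nr S) ^ 2 + (‖R‖ + ‖Q‖) ^ 2)) / 2 := by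
  refine nr_le (by have := nr_nonneg P; have := nr_nonneg S; positivity) fun x hx => ?_
  have hab : ‖x.fst‖ ^ 2 + ‖x.snd‖ ^ 2 = 1 := by rw [← WithLp.prod_norm_sq_eq_of_L2, hx, one_pow]
  calc ‖⟪x, blockOp P Q R S x⟫_ℂ‖
      ≤ ‖⟪x.fst, P x.fst⟫_ℂ‖ + ‖⟪x.fst, Q x.snd⟫_ℂ‖ + ‖⟪x.snd, R x.fst⟫_ℂ‖
          + ‖⟪x.snd, S x.snd⟫_ℂ‖ := by
        rw [inner_blockOp_apply_self]; exact norm_add₄_le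
    _ ≤ nr P * ‖x.fst‖ ^ 2 + ‖Q‖ * (‖x.fst‖ * ‖x.snd‖) + ‖R‖ * (‖x.snd‖ * ‖x.fst‖)
          + nr S * ‖x.snd‖ ^ 2 := by
        gcongr
        · exact norm_inner_self_apply_le_nr_mul_sq P _
        · exact norm_inner_apply_le_opNorm Q _ _
        · exact norm_inner_apply_le_opNorm R _ _
        · exact norm_inner_self_apply_le_nr_mul_sq S _
    _ = nr P * ‖x.fst‖ ^ 2 + nr S * ‖x.snd‖ ^ 2 + (‖R‖ + ‖Q‖) * (‖x.fst‖ * ‖x.snd‖) := by ring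
    _ ≤ _ := quadratic_form_le_of_sq_add_sq_eq_one _ _ _ _ _ hab

lemma norm_blockOp_le : ‖blockOp P Q R S‖ ≤ √(‖P‖ ^ 2 + ‖Q‖ ^ 2 + ‖R‖ ^ 2 + ‖S‖ ^ 2) := by
  refine ContinuousLinearMap.opNorm_le_bound _ (Real.sqrt_nonneg _) fun x => ?_
  have hfst : ‖P x.fst + Q x.snd‖ ≤ ‖P‖ * ‖x.fst‖ + ‖Q‖ * ‖x.snd‖ :=
    (norm_add_le _ _).trans (add_le_add (P.le_opNorm _) (Q.le_opNorm _))
  have hsnd : ‖R x.fst + S x.snd‖ ≤ ‖R‖ * ‖x.fst‖ + ‖S‖ * ‖x.snd‖ :=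
    (norm_add_le _ _).trans (add_le_add (R.le_opNorm _) (S.le_opNorm _))
  have hsq : ‖blockOp P Q R S x‖ ^ 2 ≤ (‖P‖ ^ 2 + ‖Q‖ ^ 2 + ‖R‖ ^ 2 + ‖S‖ ^ 2) * ‖x‖ ^ 2 := by
    rw [WithLp.prod_norm_sq_eq_of_L2, WithLp.prod_norm_sq_eq_of_L2 x, blockOp_apply_fst,
      blockOp_apply_snd]
    have := norm_nonneg (P x.fst + Q x.snd)
    have := norm_nonneg (R x.fst + S x.snd)
    nlinarith [sq_nonneg (‖P‖ * ‖x.snd‖ - ‖Q‖ * ‖x.fst‖),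
      sq_nonneg (‖R‖ * ‖x.snd‖ - ‖S‖ * ‖x.fst‖)]
  calc ‖blockOp P Q R S x‖ ≤ √((‖P‖ ^ 2 + ‖Q‖ ^ 2 + ‖R‖ ^ 2 + ‖S‖ ^ 2) * ‖x‖ ^ 2) :=
        Real.le_sqrt_of_sq_le hsq
    _ = _ := by rw [Real.sqrt_mul' _ (by positivity), Real.sqrt_sq (norm_nonneg x)]

end BlockOperator

theorem stmt_15_general [CompleteSpace H] (q : ℂ) (P Q R S : H →L[ℂ] H) :
    wq q (blockOp P Q R S) ≤
      ‖q‖ / 2 *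
          (nr P + nr S + Real.sqrt ((nr P - nr S) ^ 2 + (‖R‖ + ‖Q‖) ^ 2)) +
        Real.sqrt (1 - ‖q‖ ^ 2) *
          Real.sqrt (‖P‖ ^ 2 + ‖Q‖ ^ 2 + ‖R‖ ^ 2 + ‖S‖ ^ 2) :=
  calc wq q (blockOp P Q R S)
      ≤ ‖q‖ * nr (blockOp P Q R S) + √(1 - ‖q‖ ^ 2) * ‖blockOp P Q R S‖ := wq_le_nr_add _ _
    _ ≤ ‖q‖ * ((nr P + nr S + √((nr P - nr S) ^ 2 + (‖R‖ + ‖Q‖) ^ 2)) / 2)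
          + √(1 - ‖q‖ ^ 2) * √(‖P‖ ^ 2 + ‖Q‖ ^ 2 + ‖R‖ ^ 2 + ‖S‖ ^ 2) := by
        gcongr
        · exact nr_blockOp_le P Q R S
        · exact norm_blockOp_le P Q R S
    _ = _ := by ring

theorem stmt_15 [CompleteSpace H] (q : ℂ) (hq : ‖q‖ ≤ 1) (P Q R S : H →L[ℂ] H) :
    wq q (blockOp P Q R S) ≤
      ‖q‖ / 2 *
          (nr P + nr S + Real.sqrt ((nr P - nr S) ^ 2 + (‖R‖ + ‖Q‖) ^ 2)) +
        Real.sqrt (1 - ‖q‖ ^ 2) *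
          Real.sqrt (‖P‖ ^ 2 + ‖Q‖ ^ 2 + ‖R‖ ^ 2 + ‖S‖ ^ 2) :=
  stmt_15_general q P Q R S
end
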